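/- Let α be a type and g : α → α. Then for all k, r, x ∈ ℕ and y ∈ α, Δω_g (k+1) r x y = g^[r * x^k] y, where g^[j] denotes the j-fold iterate of g. -/
import Mathlib


/-- The paper's double-recursion operator `Δ^ω[g]`, defined by lexicographic recursion. -/
def Δω {α : Type*} (g : α → α) : ℕ → ℕ → ℕ → α → α
  | 0, _, _, y => g y
  | _ + 1, 0, _, y => y
  | k + 1, r + 1, x, y => Δω g k x x (Δω g (k + 1) r x y)
  termination_by k r => (k, r)

theorem stmt_7 {α : Type*} (g : α → α) :
    ∀ (k r x : ℕ) (y : α), Δω g (k + 1) r x y = g^[r * x ^ k] y := by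
  intro k
  induction k with
  | zero =>
    intro r
    induction r with
    | zero => intro x y; simp [Δω]
    | succ r ih =>
      intro x y
      rw [Δω, Δω, ih]
      simp [Function.iterate_succ_apply']
  | succ k ih =>
    intro r
    induction r with
    | zero => intro x y; simp [Δω]
    | succ r ihr =>
      intro x y
      rw [Δω, ih, ihr, ← Function.iterate_add_apply]
      ring_nf
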